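/- arXiv:2101.03355 — 3 statements merged into one kernel-verified Lean document; each statement's English description precedes it below -/
import Mathlib

section
/- Let X₁, X₂ ∈ ℂ^{n×n} be nonzero Hermitian positive semidefinite matrices. Then tr(X₁X₂) = tr(X₁)·tr(X₂) holds if and only if there exist a nonzero vector x ∈ ℂⁿ and a real scalar α > 0 such that X₁ = x xᴴ and X₂ = α·x xᴴ (equivalently: both matrices have rank one and X₁ = α'·X₂ for some positive real α'). -/
/-!
For positive semidefinite `A` and `B` one has `A ≤ tr(A) • 1`, since every eigenvalue is at most
their sum; hence `tr(A) tr(B) - tr(AB) = tr(A (tr(B) • 1 - B))` is the trace of a product of two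
positive semidefinite matrices, and such a trace vanishes only if the product does. Equality
therefore forces `X₁ X₂ = tr(X₂) X₁` and `X₂ X₁ = tr(X₁) X₂`; taking adjoints makes `X₁` and `X₂`
proportional, whence `X₁² = tr(X₁) X₁`. A positive semidefinite `A` with `A² = tr(A) A` has a unit
eigenvector `u` for the eigenvalue `t = tr(A)`, and `P = A - t u uᴴ` is Hermitian with `P² = t P`
and `tr P = 0`, so `tr(Pᴴ P) = 0` and `P = 0`.
-/

open Matrix ComplexOrder

namespace Matrix

variable {n 𝕜 : Type*} [Fintype n] [RCLike 𝕜] {A B : Matrix n n 𝕜}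

theorem PosSemidef.trace_pos_of_ne_zero (hA : A.PosSemidef) (hA0 : A ≠ 0) : 0 < A.trace :=
  hA.trace_nonneg.lt_of_ne' (hA.trace_eq_zero_iff.not.mpr hA0)

theorem PosSemidef.mul_eq_zero_of_trace_mul_eq_zero (hA : A.PosSemidef) (hB : B.PosSemidef)
    (h : (A * B).trace = 0) : A * B = 0 := by
  classical
  open scoped MatrixOrder in
  obtain ⟨C, rfl⟩ := CStarAlgebra.nonneg_iff_eq_star_mul_self.mp hA.nonneg
  open scoped MatrixOrder in
  obtain ⟨D, rfl⟩ := CStarAlgebra.nonneg_iff_eq_star_mul_self.mp hB.nonneg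
  rw [star_eq_conjTranspose, star_eq_conjTranspose] at h ⊢
  have hDC : D * Cᴴ = 0 := by
    rw [← trace_conjTranspose_mul_self_eq_zero_iff, ← h]
    calc ((D * Cᴴ)ᴴ * (D * Cᴴ)).trace = (C * (Dᴴ * D) * Cᴴ).trace := by
          simp only [conjTranspose_mul, conjTranspose_conjTranspose, mul_assoc]
      _ = (Cᴴ * C * (Dᴴ * D)).trace := by rw [trace_mul_comm, mul_assoc]
  calc Cᴴ * C * (Dᴴ * D) = Cᴴ * (D * Cᴴ)ᴴ * D := by simp only [conjTranspose_mul,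
        conjTranspose_conjTranspose, mul_assoc]
    _ = 0 := by simp [hDC]

theorem PosSemidef.trace_smul_one_sub [DecidableEq n] (hA : A.PosSemidef) :
    (A.trace • 1 - A).PosSemidef := by
  have htrace : A.trace • (1 : Matrix n n 𝕜) = algebraMap ℝ _ (∑ i, hA.1.eigenvalues i) := by
    rw [hA.1.trace_eq_sum_eigenvalues, Algebra.algebraMap_eq_smul_one, ← RCLike.ofReal_sum,
      RCLike.real_smul_eq_coe_smul (K := 𝕜)]
  open scoped MatrixOrder in
  have hle : A ≤ algebraMap ℝ _ (∑ i, hA.1.eigenvalues i) := by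
    refine le_algebraMap_of_spectrum_le fun r hr => ?_
    obtain ⟨i, rfl⟩ := hA.1.spectrum_real_eq_range_eigenvalues ▸ hr
    exact Finset.single_le_sum (fun j _ => hA.eigenvalues_nonneg j) (Finset.mem_univ i)
  rw [htrace]
  open scoped MatrixOrder in exact le_iff.mp hle

theorem PosSemidef.mul_eq_trace_smul_of_trace_mul_eq (hA : A.PosSemidef)
    (hB : B.PosSemidef) (h : (A * B).trace = A.trace * B.trace) : A * B = B.trace • A := by
  classical
  have hAB : A * (B.trace • 1 - B) = B.trace • A - A * B := by rw [mul_sub, mul_smul_comm, mul_one]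
  have hzero := hA.mul_eq_zero_of_trace_mul_eq_zero hB.trace_smul_one_sub (by
    rw [hAB, trace_sub, trace_smul, h, smul_eq_mul, mul_comm, sub_self])
  rw [hAB, sub_eq_zero] at hzero
  exact hzero.symm

theorem IsHermitian.eq_zero_of_mul_self_eq_smul_of_trace_eq_zero {P : Matrix n n 𝕜}
    (hP : P.IsHermitian) {c : 𝕜} (hPP : P * P = c • P) (htr : P.trace = 0) : P = 0 := by
  rw [← trace_conjTranspose_mul_self_eq_zero_iff, hP.eq, hPP, trace_smul, htr, smul_zero]

theorem IsHermitian.eq_vecMulVec_of_mul_self_eq_smul (hA : A.IsHermitian) {c : ℝ} {x : n → 𝕜}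
    (hAA : A * A = (c : 𝕜) • A) (htr : A.trace = c) (hx : A *ᵥ x = (c : 𝕜) • x)
    (hxx : star x ⬝ᵥ x = c) : A = vecMulVec x (star x) := by
  have hAx : A * vecMulVec x (star x) = (c : 𝕜) • vecMulVec x (star x) := by
    rw [mul_vecMulVec, hx, smul_vecMulVec]
  have hxA : vecMulVec x (star x) * A = (c : 𝕜) • vecMulVec x (star x) := by
    have hx' : star x ᵥ* A = (c : 𝕜) • star x := by
      rw [← hA.eq, ← star_mulVec, hx, star_smul, RCLike.star_def, RCLike.conj_ofReal]
    rw [vecMulVec_mul, hx', vecMulVec_smul]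
  have hxx' : vecMulVec x (star x) * vecMulVec x (star x) = (c : 𝕜) • vecMulVec x (star x) := by
    rw [vecMulVec_mul_vecMulVec, hxx, vecMulVec_smul]
  rw [← sub_eq_zero]
  refine (hA.sub (posSemidef_vecMulVec_self_star x).1).eq_zero_of_mul_self_eq_smul_of_trace_eq_zero
    (c := c) ?_ ?_
  · rw [sub_mul, mul_sub, mul_sub, hAA, hAx, hxA, hxx', smul_sub]
    abel
  · rw [trace_sub, htr, trace_vecMulVec, dotProduct_comm, hxx, sub_self]

theorem PosSemidef.exists_eq_vecMulVec_of_mul_self_eq_trace_smul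
    (hA : A.PosSemidef) (hA0 : A ≠ 0) (hAA : A * A = A.trace • A) :
    ∃ x : n → 𝕜, x ≠ 0 ∧ A = vecMulVec x (star x) := by
  classical
  obtain ⟨i, hi⟩ := Function.ne_iff.mp (hA.1.eigenvalues_eq_zero_iff.not.mpr hA0)
  set c := hA.1.eigenvalues i
  set u : n → 𝕜 := ⇑(hA.1.eigenvectorBasis i)
  have hu : A *ᵥ u = (c : 𝕜) • u := by
    rw [hA.1.mulVec_eigenvectorBasis, RCLike.real_smul_eq_coe_smul (K := 𝕜)]
  have huu : star u ⬝ᵥ u = 1 := by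
    rw [dotProduct_comm, ← EuclideanSpace.inner_eq_star_dotProduct, inner_self_eq_norm_sq_to_K,
      hA.1.eigenvectorBasis.orthonormal.1 i]
    simp
  have hu0 : u ≠ 0 := fun h => by simp [h] at huu
  have htr : A.trace = c := by
    have : (A.trace * c) • u = ((c : 𝕜) * c) • u := by
      calc (A.trace * c) • u = (A * A) *ᵥ u := by rw [hAA, smul_mulVec, hu, smul_smul]
        _ = ((c : 𝕜) * c) • u := by rw [← mulVec_mulVec, hu, mulVec_smul, hu, smul_smul]
    exact (mul_right_cancel₀ (RCLike.ofReal_ne_zero.mpr hi) (smul_left_injective 𝕜 hu0 this))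
  have hc : 0 < c := (hA.eigenvalues_nonneg i).lt_of_ne' hi
  refine ⟨(√c : 𝕜) • u, ?_, hA.1.eq_vecMulVec_of_mul_self_eq_smul (htr ▸ hAA) htr ?_ ?_⟩
  · exact smul_ne_zero (RCLike.ofReal_ne_zero.mpr (Real.sqrt_pos.mpr hc).ne') hu0
  · rw [mulVec_smul, hu, smul_comm]
  · rw [star_smul, smul_dotProduct, dotProduct_smul, huu, RCLike.star_def, RCLike.conj_ofReal,
      smul_eq_mul, smul_eq_mul, mul_one, ← RCLike.ofReal_mul, Real.mul_self_sqrt hc.le]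

theorem PosSemidef.trace_smul_eq_of_trace_mul_eq (hA : A.PosSemidef)
    (hB : B.PosSemidef) (h : (A * B).trace = A.trace * B.trace) :
    A.trace • B = B.trace • A := by
  have hBA := hB.mul_eq_trace_smul_of_trace_mul_eq hA (by rw [trace_mul_comm, h, mul_comm])
  calc A.trace • B = (A * B)ᴴ := by rw [← hBA, conjTranspose_mul, hA.1.eq, hB.1.eq]
    _ = B.trace • A := by
      rw [hA.mul_eq_trace_smul_of_trace_mul_eq hB h, conjTranspose_smul, ← trace_conjTranspose,
        hB.1.eq, hA.1.eq]

theorem PosSemidef.mul_self_eq_trace_smul_of_trace_mul_eq (hA : A.PosSemidef)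
    (hB : B.PosSemidef) (hB0 : B ≠ 0) (h : (A * B).trace = A.trace * B.trace) :
    A * A = A.trace • A := by
  refine smul_right_injective _ (hB.trace_pos_of_ne_zero hB0).ne' ?_
  calc B.trace • (A * A) = A * (A.trace • B) := by
        rw [hA.trace_smul_eq_of_trace_mul_eq hB h, mul_smul_comm]
    _ = B.trace • A.trace • A := by
        rw [mul_smul_comm, hA.mul_eq_trace_smul_of_trace_mul_eq hB h, smul_comm]

end Matrix

/-- For nonzero Hermitian positive semidefinite matrices `X₁, X₂ ∈ ℂ^{n×n}`,
`tr(X₁X₂) = tr(X₁)·tr(X₂)` holds iff there exist a nonzero `x ∈ ℂⁿ` and a real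
`α > 0` with `X₁ = x xᴴ` and `X₂ = α · x xᴴ` (equivalently: both are rank one
and proportional with a positive real ratio). -/
theorem trace_mul_eq_trace_mul_trace_iff_rank_one_proportional
    {n : ℕ} (X₁ X₂ : Matrix (Fin n) (Fin n) ℂ)
    (h₁ : X₁.PosSemidef) (h₂ : X₂.PosSemidef) (h₁0 : X₁ ≠ 0) (h₂0 : X₂ ≠ 0) :
    (X₁ * X₂).trace = X₁.trace * X₂.trace ↔
      ∃ (x : Fin n → ℂ) (α : ℝ), x ≠ 0 ∧ 0 < α ∧
        X₁ = Matrix.vecMulVec x (star x) ∧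
        X₂ = α • Matrix.vecMulVec x (star x) := by
  constructor
  · intro h
    obtain ⟨x, hx, hX₁⟩ := h₁.exists_eq_vecMulVec_of_mul_self_eq_trace_smul h₁0
      (h₁.mul_self_eq_trace_smul_of_trace_mul_eq h₂ h₂0 h)
    have htr₁ := h₁.trace_pos_of_ne_zero h₁0
    obtain ⟨α, hα, hαtr⟩ :=
      RCLike.pos_iff_exists_ofReal.mp (div_pos (h₂.trace_pos_of_ne_zero h₂0) htr₁)
    refine ⟨x, α, hx, hα, hX₁, ?_⟩
    rw [← hX₁, RCLike.real_smul_eq_coe_smul (K := ℂ), hαtr, div_eq_inv_mul, mul_smul,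
      ← h₁.trace_smul_eq_of_trace_mul_eq h₂ h, inv_smul_smul₀ htr₁.ne']
  · rintro ⟨x, α, -, -, rfl, rfl⟩
    rw [mul_smul_comm, trace_smul, trace_smul, vecMulVec_mul_vecMulVec, trace_vecMulVec,
      trace_vecMulVec, dotProduct_smul, dotProduct_comm (star x) x, smul_eq_mul, mul_smul_comm]
end

section
/- Suppose (X₁⋆, X₂⋆, t₁⋆, t₂⋆) is an optimal point of Problem (10). Then X₁⋆ = X₂⋆ and t₁⋆ = t₂⋆, and the pair (X, t) = (X₁⋆, t₁⋆) is an optimal point of Problem (8); in particular X₁⋆ has rank one. -/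
open Matrix ComplexOrder

/-- The index set `{1,…,J}×{1,…,M}×{1,…,N}` of `ℂⁿ` with `n = N·M·J`. -/
abbrev SCMAIdx (J M N : ℕ) := Fin J × Fin M × Fin N

/-- The power-constraint matrix `B_j = diag(e_j^{(J)}) ⊗ I_{NM}`: the diagonal 0/1
matrix that is the orthogonal projection onto the coordinates whose first index is `j`. -/
def SCMAB (J M N : ℕ) (j : Fin J) : Matrix (SCMAIdx J M N) (SCMAIdx J M N) ℂ :=
  Matrix.diagonal fun p => if p.1 = j then 1 else 0

/-- Feasibility for Problem (8): `X` Hermitian PSD of rank one, `Re tr(A_i X) ≥ t`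
for all `i`, and `tr(B_j X) = M·P` for all `j`. -/
def Feasible8 {J M N : ℕ} {ι : Type*}
    (A : ι → Matrix (SCMAIdx J M N) (SCMAIdx J M N) ℂ) (P : ℝ)
    (X : Matrix (SCMAIdx J M N) (SCMAIdx J M N) ℂ) (t : ℝ) : Prop :=
  X.PosSemidef ∧ X.rank = 1 ∧ (∀ i, t ≤ ((A i * X).trace).re) ∧
    ∀ j : Fin J, (SCMAB J M N j * X).trace = (M : ℂ) * (P : ℂ)

/-- Optimality for the maximization Problem (8). -/
def Optimal8 {J M N : ℕ} {ι : Type*}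
    (A : ι → Matrix (SCMAIdx J M N) (SCMAIdx J M N) ℂ) (P : ℝ)
    (X : Matrix (SCMAIdx J M N) (SCMAIdx J M N) ℂ) (t : ℝ) : Prop :=
  Feasible8 A P X t ∧ ∀ X' t', Feasible8 A P X' t' → t' ≤ t

/-- Feasibility for Problem (10): `X₁, X₂` Hermitian PSD, `Re tr(A_i X₁) ≥ t₁`,
`Re tr(A_i X₂) ≥ t₂` for all `i`, `tr(B_j X₁) = tr(B_j X₂) = M·P` for all `j`, and
`tr(X₁X₂) = tr(X₁)·tr(X₂)`. -/
def Feasible10 {J M N : ℕ} {ι : Type*}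
    (A : ι → Matrix (SCMAIdx J M N) (SCMAIdx J M N) ℂ) (P : ℝ)
    (X₁ X₂ : Matrix (SCMAIdx J M N) (SCMAIdx J M N) ℂ) (t₁ t₂ : ℝ) : Prop :=
  X₁.PosSemidef ∧ X₂.PosSemidef ∧
    (∀ i, t₁ ≤ ((A i * X₁).trace).re) ∧ (∀ i, t₂ ≤ ((A i * X₂).trace).re) ∧
    (∀ j : Fin J, (SCMAB J M N j * X₁).trace = (M : ℂ) * (P : ℂ)) ∧
    (∀ j : Fin J, (SCMAB J M N j * X₂).trace = (M : ℂ) * (P : ℂ)) ∧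
    (X₁ * X₂).trace = X₁.trace * X₂.trace

/-- Optimality for the maximization Problem (10) (objective `t₁ + t₂`). -/
def Optimal10 {J M N : ℕ} {ι : Type*}
    (A : ι → Matrix (SCMAIdx J M N) (SCMAIdx J M N) ℂ) (P : ℝ)
    (X₁ X₂ : Matrix (SCMAIdx J M N) (SCMAIdx J M N) ℂ) (t₁ t₂ : ℝ) : Prop :=
  Feasible10 A P X₁ X₂ t₁ t₂ ∧
    ∀ X₁' X₂' t₁' t₂', Feasible10 A P X₁' X₂' t₁' t₂' → t₁' + t₂' ≤ t₁ + t₂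

/-! For positive semidefinite `X₁, X₂` of common trace `c` the eigenvalue bound
`tr X² = ∑ λᵢ² ≤ (∑ λᵢ)² = c²` gives
`‖X₁ - X₂‖²_F = tr X₁² + tr X₂² - 2 tr(X₁X₂) ≤ 2c² - 2 tr(X₁X₂)`, which vanishes under the
coupling constraint `tr(X₁X₂) = tr X₁ · tr X₂`; so `X₁ = X₂`. For a single positive semidefinite
matrix, `tr X² = (tr X)² ≠ 0` means that exactly one eigenvalue is nonzero, i.e. rank one.
Conversely, every feasible point `(X, t)` of (8) gives the feasible point `(X, X, t, t)` of (10),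
and the power constraints fix `tr X = J·M·P ≠ 0`. -/

section CardNonzero

variable {ι R : Type*} [Fintype ι] [CommRing R] [LinearOrder R] [IsStrictOrderedRing R]

lemma card_ne_zero_eq_one_iff_sum_sq_eq_sq_sum {f : ι → R} (hf : ∀ i, 0 ≤ f i) :
    Fintype.card {i // f i ≠ 0} = 1 ↔ ∑ i, f i ^ 2 = (∑ i, f i) ^ 2 ∧ ∑ i, f i ≠ 0 := by
  classical
  constructor
  · intro h
    obtain ⟨⟨i₀, hi₀⟩, huniq⟩ := Fintype.card_eq_one_iff.1 h
    have hzero : ∀ j, j ≠ i₀ → f j = 0 := fun j hj =>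
      by_contra fun hfj => hj (congrArg Subtype.val (huniq ⟨j, hfj⟩))
    rw [Finset.sum_eq_single i₀ (fun j _ hj => by simp [hzero j hj]) (by simp),
      Finset.sum_eq_single i₀ (fun j _ hj => hzero j hj) (by simp)]
    exact ⟨rfl, hi₀⟩
  · rintro ⟨hsq, hS⟩
    set S := ∑ i, f i
    have hle : ∀ i, f i ≤ S := fun i => Finset.single_le_sum (fun j _ => hf j) (Finset.mem_univ i)
    have hsq_eq : ∀ i ∈ Finset.univ, f i ^ 2 = f i * S :=
      (Finset.sum_eq_sum_iff_of_le fun i _ => by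
        rw [sq]; exact mul_le_mul_of_nonneg_left (hle i) (hf i)).1
        (by rw [hsq, ← Finset.sum_mul, sq])
    have heq : ∀ i, f i ≠ 0 → f i = S := fun i hi =>
      mul_left_cancel₀ hi (by rw [← sq, hsq_eq i (Finset.mem_univ i)])
    obtain ⟨i₀, -, hi₀⟩ := Finset.exists_ne_zero_of_sum_ne_zero hS
    refine Fintype.card_eq_one_iff.2 ⟨⟨i₀, hi₀⟩, fun ⟨j, hj⟩ => Subtype.ext ?_⟩
    by_contra hji
    have hpair : f j + f i₀ ≤ S := by
      rw [← Finset.sum_pair hji]; exact Finset.sum_le_univ_sum_of_nonneg hf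
    rw [heq j hj, heq i₀ hi₀] at hpair
    exact hS (le_antisymm (by linarith) (Finset.sum_nonneg fun i _ => hf i))

end CardNonzero

namespace Matrix

variable {𝕜 n : Type*} [RCLike 𝕜] [Fintype n] [DecidableEq n] {A B : Matrix n n 𝕜}

lemma IsHermitian.trace_eq_ofReal_sum_eigenvalues (hA : A.IsHermitian) :
    A.trace = ((∑ i, hA.eigenvalues i : ℝ) : 𝕜) := by
  rw [hA.trace_eq_sum_eigenvalues, RCLike.ofReal_sum]

lemma IsHermitian.trace_mul_self (hA : A.IsHermitian) :
    (A * A).trace = ((∑ i, hA.eigenvalues i ^ 2 : ℝ) : 𝕜) := by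
  conv_lhs => rw [hA.spectral_theorem, ← map_mul, Unitary.conjStarAlgAut_apply, trace_mul_cycle,
    Unitary.coe_star_mul_self, one_mul, diagonal_mul_diagonal, trace_diagonal]
  simp [sq]

lemma PosSemidef.rank_eq_one_iff (hA : A.PosSemidef) :
    A.rank = 1 ↔ (A * A).trace = A.trace * A.trace ∧ A.trace ≠ 0 := by
  rw [hA.1.rank_eq_card_non_zero_eigs,
    card_ne_zero_eq_one_iff_sum_sq_eq_sq_sum hA.eigenvalues_nonneg, hA.1.trace_mul_self,
    hA.1.trace_eq_ofReal_sum_eigenvalues, ← RCLike.ofReal_mul, RCLike.ofReal_inj, sq,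
    RCLike.ofReal_ne_zero]

lemma PosSemidef.eq_of_trace_mul_eq_trace_mul_trace (hA : A.PosSemidef) (hB : B.PosSemidef)
    (htr : A.trace = B.trace) (h : (A * B).trace = A.trace * B.trace) : A = B := by
  have hD : (A - B).IsHermitian := hA.1.sub hB.1
  set s := ∑ i, hA.1.eigenvalues i
  have hsA : A.trace = (s : 𝕜) := hA.1.trace_eq_ofReal_sum_eigenvalues
  have hsB : ∑ i, hB.1.eigenvalues i = s := by
    rw [← RCLike.ofReal_inj (K := 𝕜), ← hB.1.trace_eq_ofReal_sum_eigenvalues, ← htr, hsA]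
  have hA2 : ∑ i, hA.1.eigenvalues i ^ 2 ≤ s ^ 2 :=
    Finset.sum_sq_le_sq_sum_of_nonneg fun i _ => hA.eigenvalues_nonneg i
  have hB2 : ∑ i, hB.1.eigenvalues i ^ 2 ≤ s ^ 2 :=
    hsB ▸ Finset.sum_sq_le_sq_sum_of_nonneg fun i _ => hB.eigenvalues_nonneg i
  have hD2 : ∑ i, hD.eigenvalues i ^ 2
      = ∑ i, hA.1.eigenvalues i ^ 2 + ∑ i, hB.1.eigenvalues i ^ 2 - 2 * s ^ 2 := by
    rw [← RCLike.ofReal_inj (K := 𝕜), ← hD.trace_mul_self, sub_mul, mul_sub, mul_sub,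
      trace_sub, trace_sub, trace_sub, trace_mul_comm B A, h, ← htr, hsA,
      hA.1.trace_mul_self, hB.1.trace_mul_self]
    push_cast; ring
  have hD0 : ∑ i, hD.eigenvalues i ^ 2 = 0 :=
    le_antisymm (by linarith) (Finset.sum_nonneg fun i _ => sq_nonneg _)
  rw [← sub_eq_zero, ← hD.eigenvalues_eq_zero_iff]
  ext i
  exact pow_eq_zero_iff two_ne_zero |>.1 <|
    (Finset.sum_eq_zero_iff_of_nonneg fun i _ => sq_nonneg _).1 hD0 i (Finset.mem_univ i)

end Matrix

section SCMA

variable {J M N : ℕ}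

lemma sum_SCMAB : ∑ j, SCMAB J M N j = 1 := by
  ext p q
  simp [SCMAB, Matrix.sum_apply, diagonal_apply, one_apply]

lemma trace_eq_of_trace_SCMAB_mul_eq {X : Matrix (SCMAIdx J M N) (SCMAIdx J M N) ℂ} {c : ℂ}
    (h : ∀ j, (SCMAB J M N j * X).trace = c) : X.trace = J * c := by
  rw [← Matrix.one_mul X, ← sum_SCMAB, Finset.sum_mul, trace_sum]
  simp [h]

variable {ι : Type*} {A : ι → Matrix (SCMAIdx J M N) (SCMAIdx J M N) ℂ} {P : ℝ}

lemma Feasible8.feasible10 {X : Matrix (SCMAIdx J M N) (SCMAIdx J M N) ℂ} {t : ℝ}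
    (h : Feasible8 A P X t) : Feasible10 A P X X t t :=
  let ⟨hX, hrank, hA, hB⟩ := h
  ⟨hX, hX, hA, hA, hB, hB, (hX.rank_eq_one_iff.1 hrank).1⟩

end SCMA

theorem optimal10_implies_optimal8_general
    {J M N : ℕ} (hJ : 0 < J) (hM : 0 < M)
    {ι : Type*}
    (A : ι → Matrix (SCMAIdx J M N) (SCMAIdx J M N) ℂ)
    (P : ℝ) (hP : 0 < P)
    (X₁ X₂ : Matrix (SCMAIdx J M N) (SCMAIdx J M N) ℂ) (t₁ t₂ : ℝ)
    (hopt : Optimal10 A P X₁ X₂ t₁ t₂) :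
    X₁ = X₂ ∧ t₁ = t₂ ∧ Optimal8 A P X₁ t₁ ∧ X₁.rank = 1 := by
  obtain ⟨⟨hX₁, hX₂, hA₁, hA₂, hB₁, hB₂, hmul⟩, hmax⟩ := hopt
  have htr₁ := trace_eq_of_trace_SCMAB_mul_eq hB₁
  have htr₂ := trace_eq_of_trace_SCMAB_mul_eq hB₂
  have hne : X₁.trace ≠ 0 := by simp [htr₁, hJ.ne', hM.ne', hP.ne']
  obtain rfl : X₁ = X₂ := hX₁.eq_of_trace_mul_eq_trace_mul_trace hX₂ (htr₁.trans htr₂.symm) hmul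
  have hrank : X₁.rank = 1 := hX₁.rank_eq_one_iff.2 ⟨hmul, hne⟩
  have hfeas : Feasible8 A P X₁ (max t₁ t₂) :=
    ⟨hX₁, hrank, fun i => max_le (hA₁ i) (hA₂ i), hB₁⟩
  obtain rfl : t₁ = t₂ := by
    have := hmax _ _ _ _ hfeas.feasible10
    linarith [le_max_left t₁ t₂, le_max_right t₁ t₂]
  refine ⟨rfl, rfl, ⟨⟨hX₁, hrank, hA₁, hB₁⟩, fun X' t' h' => ?_⟩, hrank⟩
  linarith [hmax _ _ _ _ h'.feasible10]

/-- Theorem 1 (first direction): if `(X₁⋆, X₂⋆, t₁⋆, t₂⋆)` is an optimal point of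
Problem (10), then `X₁⋆ = X₂⋆`, `t₁⋆ = t₂⋆`, `(X₁⋆, t₁⋆)` is an optimal point of
Problem (8), and in particular `X₁⋆` has rank one. -/
theorem optimal10_implies_optimal8
    {J M N : ℕ} (hJ : 0 < J) (hM : 0 < M) (hN : 0 < N)
    {ι : Type*} [Fintype ι] [Nonempty ι]
    (A : ι → Matrix (SCMAIdx J M N) (SCMAIdx J M N) ℂ)
    (hA : ∀ i, (A i).IsHermitian)
    (P : ℝ) (hP : 0 < P)
    (X₁ X₂ : Matrix (SCMAIdx J M N) (SCMAIdx J M N) ℂ) (t₁ t₂ : ℝ)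
    (hopt : Optimal10 A P X₁ X₂ t₁ t₂) :
    X₁ = X₂ ∧ t₁ = t₂ ∧ Optimal8 A P X₁ t₁ ∧ X₁.rank = 1 :=
  optimal10_implies_optimal8_general hJ hM A P hP X₁ X₂ t₁ t₂ hopt
end

section
/- Suppose (X₁⋆, X₂⋆, t₁⋆, t₂⋆) is an optimal point of Problem (10). Then t₁⋆ = t₂⋆ = min_{i ∈ ι} Re tr(A_i X₁⋆). -/
open Matrix ComplexOrder

/-!
An optimal point makes each `tₖ` as large as the constraints on it allow, so `tₖ` is the minimum
of `Re tr(A_i Xₖ)` over `i`. The power constraints sum to `tr X₁ = tr X₂`. A positive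
semidefinite `X` has `tr X² = ∑ λᵢ² ≤ (∑ λᵢ)² = (tr X)²`, hence for positive semidefinite `X, Y`
with `tr(XY) = tr X · tr Y` we get `‖X - Y‖_F² = tr X² + tr Y² - 2 tr(XY) ≤ (tr X - tr Y)² = 0`.
So `X₁ = X₂` and the two minima coincide.
-/

namespace Matrix

variable {𝕜 n : Type*} [RCLike 𝕜] [Fintype n] [DecidableEq n]

theorem IsHermitian.trace_mul_self_eq_sum_eigenvalues_sq {X : Matrix n n 𝕜}
    (hX : X.IsHermitian) : (X * X).trace = ∑ i, (hX.eigenvalues i : 𝕜) ^ 2 := by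
  conv_lhs => rw [hX.spectral_theorem, ← map_mul, Unitary.conjStarAlgAut_apply, trace_mul_cycle,
    Unitary.coe_star_mul_self, one_mul, diagonal_mul_diagonal, trace_diagonal]
  simp [sq]

theorem PosSemidef.trace_mul_self_le_sq {X : Matrix n n 𝕜} (hX : X.PosSemidef) :
    (X * X).trace ≤ X.trace ^ 2 := by
  have key := Finset.sum_sq_le_sq_sum_of_nonneg (s := Finset.univ) fun i _ ↦
    hX.eigenvalues_nonneg i
  rw [hX.1.trace_mul_self_eq_sum_eigenvalues_sq, hX.1.trace_eq_sum_eigenvalues]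
  norm_cast

theorem PosSemidef.eq_of_trace_mul_eq_trace_mul_trace_s6 {X Y : Matrix n n 𝕜}
    (hX : X.PosSemidef) (hY : Y.PosSemidef) (htr : X.trace = Y.trace)
    (h : (X * Y).trace = X.trace * Y.trace) : X = Y := by
  have hZ : (X - Y)ᴴ * (X - Y) = X * X + Y * Y - (X * Y + Y * X) := by
    rw [conjTranspose_sub, hX.1.eq, hY.1.eq]; noncomm_ring
  have hle : ((X - Y)ᴴ * (X - Y)).trace ≤ 0 := calc
    ((X - Y)ᴴ * (X - Y)).trace = (X * X).trace + (Y * Y).trace - 2 * (X.trace * Y.trace) := by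
      rw [hZ, trace_sub, trace_add, trace_add, trace_mul_comm Y X, h]; ring
    _ ≤ X.trace ^ 2 + Y.trace ^ 2 - 2 * (X.trace * Y.trace) := by
      gcongr
      exacts [hX.trace_mul_self_le_sq, hY.trace_mul_self_le_sq]
    _ = 0 := by rw [htr]; ring
  exact sub_eq_zero.mp <| trace_conjTranspose_mul_self_eq_zero_iff.mp <|
    le_antisymm hle (posSemidef_conjTranspose_mul_self _).trace_nonneg

end Matrix

theorem sum_trace_SCMAB_mul {J M N : ℕ} (X : Matrix (SCMAIdx J M N) (SCMAIdx J M N) ℂ) :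
    ∑ j, (SCMAB J M N j * X).trace = X.trace := by
  simp only [SCMAB, trace, diag, diagonal_mul, ite_mul, one_mul, zero_mul]
  rw [Finset.sum_comm]
  simp

section Problem10

variable {J M N : ℕ} {ι : Type*} {A : ι → Matrix (SCMAIdx J M N) (SCMAIdx J M N) ℂ} {P : ℝ}
  {X₁ X₂ : Matrix (SCMAIdx J M N) (SCMAIdx J M N) ℂ} {t₁ t₂ : ℝ}

theorem Feasible10.trace_eq (h : Feasible10 A P X₁ X₂ t₁ t₂) : X₁.trace = X₂.trace := by
  obtain ⟨-, -, -, -, hB₁, hB₂, -⟩ := h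
  simp only [← sum_trace_SCMAB_mul X₁, ← sum_trace_SCMAB_mul X₂, hB₁, hB₂]

theorem Feasible10.fst_eq_snd (h : Feasible10 A P X₁ X₂ t₁ t₂) : X₁ = X₂ := by
  have htrace := h.trace_eq
  obtain ⟨hX₁, hX₂, -, -, -, -, htr⟩ := h
  exact hX₁.eq_of_trace_mul_eq_trace_mul_trace_s6 hX₂ htrace htr

theorem Feasible10.to_inf' [Fintype ι] [Nonempty ι] (h : Feasible10 A P X₁ X₂ t₁ t₂) :
    Feasible10 A P X₁ X₂
      (Finset.univ.inf' Finset.univ_nonempty fun i ↦ ((A i * X₁).trace).re)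
      (Finset.univ.inf' Finset.univ_nonempty fun i ↦ ((A i * X₂).trace).re) := by
  obtain ⟨hX₁, hX₂, -, -, hB₁, hB₂, htr⟩ := h
  exact ⟨hX₁, hX₂, fun i ↦ Finset.inf'_le _ (Finset.mem_univ i),
    fun i ↦ Finset.inf'_le _ (Finset.mem_univ i), hB₁, hB₂, htr⟩

theorem Optimal10.eq_inf' [Fintype ι] [Nonempty ι] (h : Optimal10 A P X₁ X₂ t₁ t₂) :
    t₁ = Finset.univ.inf' Finset.univ_nonempty (fun i ↦ ((A i * X₁).trace).re) ∧
      t₂ = Finset.univ.inf' Finset.univ_nonempty (fun i ↦ ((A i * X₂).trace).re) := by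
  obtain ⟨hfeas, hmax⟩ := h
  have hsum := hmax _ _ _ _ hfeas.to_inf'
  obtain ⟨-, -, ht₁, ht₂, -⟩ := hfeas
  have hle₁ := Finset.le_inf' Finset.univ_nonempty _ fun i _ ↦ ht₁ i
  have hle₂ := Finset.le_inf' Finset.univ_nonempty _ fun i _ ↦ ht₂ i
  constructor <;> linarith

end Problem10

theorem optimal10_t_eq_min_general
    {J M N : ℕ}
    {ι : Type*} [Fintype ι] [Nonempty ι]
    (A : ι → Matrix (SCMAIdx J M N) (SCMAIdx J M N) ℂ)
    (P : ℝ)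
    (X₁ X₂ : Matrix (SCMAIdx J M N) (SCMAIdx J M N) ℂ) (t₁ t₂ : ℝ)
    (hopt : Optimal10 A P X₁ X₂ t₁ t₂) :
    t₁ = t₂ ∧
      t₁ = Finset.univ.inf' Finset.univ_nonempty (fun i => ((A i * X₁).trace).re) := by
  obtain ⟨ht₁, ht₂⟩ := hopt.eq_inf'
  rw [hopt.1.fst_eq_snd] at ht₁ ⊢
  exact ⟨ht₁.trans ht₂.symm, ht₁⟩

/-- If `(X₁⋆, X₂⋆, t₁⋆, t₂⋆)` is an optimal point of Problem (10), then
`t₁⋆ = t₂⋆ = min_{i ∈ ι} Re tr(A_i X₁⋆)`. -/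
theorem optimal10_t_eq_min
    {J M N : ℕ} (hJ : 0 < J) (hM : 0 < M) (hN : 0 < N)
    {ι : Type*} [Fintype ι] [Nonempty ι]
    (A : ι → Matrix (SCMAIdx J M N) (SCMAIdx J M N) ℂ)
    (hA : ∀ i, (A i).IsHermitian)
    (P : ℝ) (hP : 0 < P)
    (X₁ X₂ : Matrix (SCMAIdx J M N) (SCMAIdx J M N) ℂ) (t₁ t₂ : ℝ)
    (hopt : Optimal10 A P X₁ X₂ t₁ t₂) :
    t₁ = t₂ ∧
      t₁ = Finset.univ.inf' Finset.univ_nonempty (fun i => ((A i * X₁).trace).re) :=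
  optimal10_t_eq_min_general A P X₁ X₂ t₁ t₂ hopt
end
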